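/- In U_q(sl3) with simple roots α, β, set γ = α+β, f_γ = f_β f_α − q f_α f_β, and for the shifted extremal projector π(s) of the sl2-triple (e_α, f_α, h_α), define \hat f_γ(s) = f_β f_α − f_α f_β [s]_q/[s+1]_q. Then π(s) f_γ = \hat f_γ(s) π(s+1) holds as an identity of operators on every highest weight module where coefficients are defined. -/

import Mathlib

open Finset

noncomputable section

/-- `(u - u⁻¹)/(q - q⁻¹)`; with `u = q^z` this is the q-number `[z]_q`. -/
def qNum (q u : ℂ) : ℂ := (u - u⁻¹) / (q - q⁻¹)

/-- q-factorial `[k]_q!`. -/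
def qFact (q : ℂ) (k : ℕ) : ℂ := ∏ i ∈ Finset.range k, qNum q (q ^ (i + 1))

/-!
The quantum Serre relation says precisely that `f_α` `q`-commutes with
`f_γ = f_β f_α - q f_α f_β` and `q⁻¹`-commutes with `f_β f_α - q⁻¹ f_α f_β`, while
`[e_α, f_γ] = -K_α f_β`. On a weight vector `v` this gives
`e_α^(k+1) f_γ v = f_γ e_α^(k+1) v - q^k [k+1] (q κ) f_β e_α^k v`, and pushing `f_α^(k+1)`
through writes `f_α^(k+1) e_α^(k+1) f_γ v` in terms of the two `q`-commutators applied to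
`f_α^j e_α^j v`, `j = k, k+1`. Regrouping `π(s) f_γ v` by `j`, the factor `[k+1]` cancels
against the `q`-factorial, and what is left of each coefficient is the coefficient of `π(s+1)`
times the matching coefficient of `\hat f_γ(s)`: this only uses `(q - q⁻¹) [u] = u - u⁻¹`.
-/

lemma sub_inv_ne_zero {K : Type*} [Field K] {u : K} (hu : u ≠ 0) (hu2 : u ^ 2 ≠ 1) :
    u - u⁻¹ ≠ 0 := by
  intro h
  apply hu2
  rw [sq]
  nth_rewrite 2 [sub_eq_zero.mp h]
  exact mul_inv_cancel₀ hu

section QNumbers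

variable {q : ℂ}

lemma qNum_ne_zero (hq : q - q⁻¹ ≠ 0) {u : ℂ} (hu : u ≠ 0) (hu2 : u ^ 2 ≠ 1) :
    qNum q u ≠ 0 :=
  div_ne_zero (sub_inv_ne_zero hu hu2) hq

lemma qNum_self (hq : q - q⁻¹ ≠ 0) : qNum q q = 1 := div_self hq

lemma sub_inv_mul_qNum (hq : q - q⁻¹ ≠ 0) (u : ℂ) : (q - q⁻¹) * qNum q u = u - u⁻¹ :=
  mul_div_cancel₀ _ hq

lemma qNum_mul_right (hq : q - q⁻¹ ≠ 0) {u : ℂ} (hu : u ≠ 0) :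
    qNum q (u * q) = q⁻¹ * qNum q u + u := by
  rw [qNum, qNum, mul_div_assoc', div_add' _ _ _ hq, div_left_inj' hq]
  field_simp
  ring

end QNumbers

def qComm {K A : Type*} [Field K] [Ring A] [Algebra K A] (c : K) (x y : A) : A :=
  x * y - c • (y * x)

section QCommutation

variable {K A : Type*} [Field K] [Ring A] [Algebra K A]

lemma pow_mul_eq_smul_mul_pow {a b : A} {c : K} (h : a * b = c • (b * a)) (m : ℕ) :
    a ^ m * b = c ^ m • (b * a ^ m) := by
  have hab : SemiconjBy b (c • a) a := by
    rw [SemiconjBy, mul_smul_comm, ← h]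
  rw [← (hab.pow_right m).eq, smul_pow, mul_smul_comm]

lemma mul_pow_eq_smul_pow_mul {a b : A} {c : K} (h : a * b = c • (b * a)) (m : ℕ) :
    a * b ^ m = c ^ m • (b ^ m * a) := by
  have hab : SemiconjBy a b (c • b) := by
    rw [SemiconjBy, smul_mul_assoc, h]
  rw [(hab.pow_right m).eq, smul_pow, smul_mul_assoc]

lemma mul_qComm_of_serre {a b : A} {c : K} (hc : c ≠ 0)
    (h : a * a * b - (c + c⁻¹) • (a * b * a) + b * a * a = 0) :
    a * qComm c b a = c • (qComm c b a * a) := by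
  rw [← sub_eq_zero]
  have key : a * qComm c b a - c • (qComm c b a * a)
      = (-c) • (a * a * b - (c + c⁻¹) • (a * b * a) + b * a * a) := by
    simp only [qComm, mul_sub, sub_mul, mul_smul_comm, smul_mul_assoc, smul_sub, smul_add,
      smul_smul, mul_assoc]
    match_scalars <;> field_simp
    ring
  rw [key, h, smul_zero]

lemma qComm_inv_sub_qComm (q : K) (a b : A) :
    qComm q⁻¹ b a - qComm q b a = (q - q⁻¹) • (a * b) := by
  simp only [qComm]
  module

lemma pow_succ_mul_eq {a b : A} {q : K}
    (hG : a * qComm q b a = q • (qComm q b a * a))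
    (hH : a * qComm q⁻¹ b a = q⁻¹ • (qComm q⁻¹ b a * a)) (m : ℕ) :
    (q - q⁻¹) • (a ^ (m + 1) * b)
      = q⁻¹ ^ m • (qComm q⁻¹ b a * a ^ m) - q ^ m • (qComm q b a * a ^ m) := by
  rw [pow_succ, mul_assoc, ← mul_smul_comm, ← qComm_inv_sub_qComm, mul_sub,
    pow_mul_eq_smul_mul_pow hG, pow_mul_eq_smul_mul_pow hH]

lemma mul_qComm_eq {e fa fb k k' : A} {q : K} (hq0 : q ≠ 0) (hq : q - q⁻¹ ≠ 0)
    (hK : k * k' = 1) (hK' : k' * k = 1) (hKFb : k * fb = q • (fb * k))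
    (hEF : e * fa - fa * e = (q - q⁻¹)⁻¹ • (k - k')) (hEFb : e * fb = fb * e) :
    e * qComm q fb fa = qComm q fb fa * e - k * fb := by
  have hEFa : e * fa = fa * e + (q - q⁻¹)⁻¹ • (k - k') := by rw [← hEF]; abel
  have hFbK : fb * k = q⁻¹ • (k * fb) := by
    rw [hKFb, smul_smul, inv_mul_cancel₀ hq0, one_smul]
  have hFbK' : fb * k' = q • (k' * fb) := by
    calc fb * k' = k' * (k * fb) * k' := by rw [← mul_assoc, hK', one_mul]
      _ = q • (k' * fb) := by
          rw [hKFb, mul_smul_comm, smul_mul_assoc, mul_assoc, mul_assoc, hK, mul_one]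
  calc e * qComm q fb fa = fb * (e * fa) - q • (e * fa * fb) := by
        rw [qComm, mul_sub, mul_smul_comm, ← mul_assoc, hEFb, mul_assoc, ← mul_assoc e fa]
    _ = qComm q fb fa * e
          + (q - q⁻¹)⁻¹ • (fb * k - fb * k' - q • (k * fb) + q • (k' * fb)) := by
        simp only [hEFa, qComm, mul_add, add_mul, mul_sub, sub_mul, mul_smul_comm, smul_mul_assoc,
          mul_assoc, hEFb]
        module
    _ = qComm q fb fa * e - k * fb := by
        rw [hFbK, hFbK', sub_eq_add_neg (qComm q fb fa * e), add_right_inj]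
        have h : q⁻¹ • (k * fb) - q • (k' * fb) - q • (k * fb) + q • (k' * fb)
            = -((q - q⁻¹) • (k * fb)) := by
          module
        rw [h, smul_neg, smul_smul, inv_mul_cancel₀ hq, one_smul]

end QCommutation

/-- With `t = q^s`, the `k`-th coefficient of `π(s)` on a vector of `K_α`-eigenvalue `κ` is
`projCoeff q t (t * (q * κ)⁻¹) k`, the factor `y = t (q κ)⁻¹` being `q^(s - h_α - 1)`. -/
def projCoeff (q t y : ℂ) (k : ℕ) : ℂ :=
  (-1) ^ k * y ^ k / (qFact q k * ∏ i ∈ range k, qNum q (t * q ^ (i + 1)))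

section ProjCoeff

variable {q t y : ℂ}

lemma projCoeff_succ (k : ℕ) :
    projCoeff q t y (k + 1)
      = projCoeff q t y k * (-y) / (qNum q (q ^ (k + 1)) * qNum q (t * q ^ (k + 1))) := by
  unfold projCoeff qFact
  rw [prod_range_succ, prod_range_succ]
  ring

lemma projCoeff_mul_q (hp : qNum q (t * q) ≠ 0) (k : ℕ) :
    projCoeff q (t * q) y k
      = projCoeff q t y k * qNum q (t * q) / qNum q (t * q ^ (k + 1)) := by
  have hprod : (∏ i ∈ range k, qNum q (t * q ^ (i + 1))) * qNum q (t * q ^ (k + 1))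
      = qNum q (t * q) * ∏ i ∈ range k, qNum q (t * q * q ^ (i + 1)) := by
    rw [← prod_range_succ, prod_range_succ', pow_one, mul_comm]
    simp only [pow_succ, mul_assoc, mul_comm q]
  unfold projCoeff
  rw [← mul_div_mul_left _ _ hp, mul_left_comm _ (qFact q k), ← hprod]
  ring

lemma projCoeff_succ_mul {κ : ℂ} (hκ : κ ≠ 0) {k : ℕ} (hd : qNum q (q ^ (k + 1)) ≠ 0) :
    projCoeff q t (t * κ⁻¹) (k + 1) * (q ^ k * qNum q (q ^ (k + 1)) * (q * κ))
      = -(projCoeff q t (t * κ⁻¹) k * (t * q ^ (k + 1)) / qNum q (t * q ^ (k + 1))) := by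
  rw [projCoeff_succ]
  field_simp
  ring

lemma projCoeff_intertwining_term {M : Type*} [AddCommGroup M] [Module ℂ M] {κ : ℂ} (hq0 : q ≠ 0)
    (hq : q - q⁻¹ ≠ 0) (hκ : κ ≠ 0) {k : ℕ} (hd : qNum q (q ^ (k + 1)) ≠ 0)
    (hu : qNum q (t * q ^ (k + 1)) ≠ 0) (hp : qNum q (t * q) ≠ 0) (x z : M) :
    (projCoeff q t (t * κ⁻¹) k * q ^ k) • (z - q • x)
      + (projCoeff q t (t * κ⁻¹) (k + 1)
          * (q ^ k * qNum q (q ^ (k + 1)) * (q * κ) / (q - q⁻¹)))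
        • (q ^ k • (z - q • x) - q⁻¹ ^ k • (z - q⁻¹ • x))
      = projCoeff q (t * q) (t * κ⁻¹) k • (z - (qNum q t / qNum q (t * q)) • x) := by
  have hRu := sub_inv_mul_qNum hq (t * q ^ (k + 1))
  have hRp := sub_inv_mul_qNum hq (t * q)
  have hRs := sub_inv_mul_qNum hq t
  rw [mul_div_assoc', projCoeff_succ_mul hκ hd, projCoeff_mul_q hp]
  generalize projCoeff q t (t * κ⁻¹) k = c
  rw [inv_pow, pow_succ] at *
  have hQ : q ^ k ≠ 0 := pow_ne_zero k hq0
  generalize q ^ k = Q at *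
  generalize qNum q (t * (Q * q)) = u at *
  generalize qNum q (t * q) = p at *
  generalize qNum q t = s at *
  generalize q - q⁻¹ = D at *
  match_scalars
  · field_simp
    linear_combination c * Q * hRu - c * hRp - c * t⁻¹ * q⁻¹ * mul_inv_cancel₀ hQ
  · field_simp
    linear_combination (-c * q * Q) * hRu + c * hRs + c * t⁻¹ * mul_inv_cancel₀ hq0
      + c * q * q⁻¹ * t⁻¹ * mul_inv_cancel₀ hQ

end ProjCoeff

lemma sum_range_eq_of_succ_eq {M : Type*} [AddCommMonoid M] {a b d : ℕ → M} {N : ℕ}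
    (h0 : a 0 = b 0) (hsucc : ∀ k, a (k + 1) = b (k + 1) + d k) (ha : a (N + 1) = 0)
    (hb : b (N + 1) = 0) :
    ∑ k ∈ range (N + 1), a k = ∑ k ∈ range (N + 1), (b k + d k) := by
  have hsa := sum_range_succ' a (N + 1)
  have hsb := sum_range_succ' b (N + 1)
  rw [sum_range_succ, ha, add_zero] at hsa
  rw [sum_range_succ, hb, add_zero] at hsb
  simp only [hsa, hsb, hsucc, h0, sum_add_distrib]
  abel

section Vectors

variable {V : Type*} [AddCommGroup V] [Module ℂ V]

lemma apply_pow_apply_eq_smul {k e : Module.End ℂ V} {c κ : ℂ} (h : k * e = c • (e * k))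
    {v : V} (hv : k v = κ • v) (m : ℕ) : k ((e ^ m) v) = (c ^ m * κ) • (e ^ m) v := by
  have h' := congr($(mul_pow_eq_smul_pow_mul h m) v)
  simp only [Module.End.mul_apply, LinearMap.smul_apply] at h'
  rw [h', hv, map_smul, smul_smul]

variable {q κ : ℂ} {e fa fb k : Module.End ℂ V}

lemma pow_succ_apply_qComm (hq0 : q ≠ 0) (hq : q - q⁻¹ ≠ 0) (hKE : k * e = q ^ 2 • (e * k))
    (hKFb : k * fb = q • (fb * k)) (hEFb : e * fb = fb * e)
    (hEG : e * qComm q fb fa = qComm q fb fa * e - k * fb) {v : V} (hv : k v = κ • v)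
    (m : ℕ) :
    (e ^ (m + 1)) (qComm q fb fa v)
      = qComm q fb fa ((e ^ (m + 1)) v)
        - (q ^ m * qNum q (q ^ (m + 1)) * (q * κ)) • fb ((e ^ m) v) := by
  have hkfb : ∀ n : ℕ, k (fb ((e ^ n) v)) = (q * ((q ^ 2) ^ n * κ)) • fb ((e ^ n) v) := by
    intro n
    have h := congr($hKFb ((e ^ n) v))
    simp only [Module.End.mul_apply, LinearMap.smul_apply] at h
    rw [h, apply_pow_apply_eq_smul hKE hv, map_smul, smul_smul]
  have hEG' : ∀ w, e (qComm q fb fa w) = qComm q fb fa (e w) - k (fb w) := fun w => by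
    simpa using congr($hEG w)
  have hefb : ∀ w, e (fb w) = fb (e w) := fun w => congr($hEFb w)
  have hpow : ∀ n w, e ((e ^ n) w) = (e ^ (n + 1)) w := fun n w => by
    rw [pow_succ', Module.End.mul_apply]
  induction m with
  | zero => simpa [hEG', qNum_self hq] using hkfb 0
  | succ n ih =>
    rw [← hpow, ih, map_sub, map_smul, hEG', hefb, hpow, hpow, hkfb, sub_sub, ← add_smul,
      pow_succ q (n + 1), qNum_mul_right hq (pow_ne_zero _ hq0)]
    congr 2
    field_simp
    ring

lemma pow_succ_apply_pow_succ_apply_qComm (hq0 : q ≠ 0) (hq : q - q⁻¹ ≠ 0)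
    (hKE : k * e = q ^ 2 • (e * k)) (hKFb : k * fb = q • (fb * k)) (hEFb : e * fb = fb * e)
    (hEG : e * qComm q fb fa = qComm q fb fa * e - k * fb)
    (hG : fa * qComm q fb fa = q • (qComm q fb fa * fa))
    (hH : fa * qComm q⁻¹ fb fa = q⁻¹ • (qComm q⁻¹ fb fa * fa)) {v : V} (hv : k v = κ • v)
    (m : ℕ) :
    (fa ^ (m + 1)) ((e ^ (m + 1)) (qComm q fb fa v))
      = q ^ (m + 1) • qComm q fb fa ((fa ^ (m + 1)) ((e ^ (m + 1)) v))
        + (q ^ m * qNum q (q ^ (m + 1)) * (q * κ) / (q - q⁻¹))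
          • (q ^ m • qComm q fb fa ((fa ^ m) ((e ^ m) v))
            - q⁻¹ ^ m • qComm q⁻¹ fb fa ((fa ^ m) ((e ^ m) v))) := by
  have hGpow := congr($(pow_mul_eq_smul_mul_pow hG (m + 1)) ((e ^ (m + 1)) v))
  have hFb := congr($(pow_succ_mul_eq hG hH m) ((e ^ m) v))
  simp only [Module.End.mul_apply, LinearMap.smul_apply, LinearMap.sub_apply] at hGpow hFb
  rw [pow_succ_apply_qComm hq0 hq hKE hKFb hEFb hEG hv, map_sub, map_smul, hGpow,
    ← inv_smul_smul₀ hq ((fa ^ (m + 1)) (fb ((e ^ m) v))), hFb]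
  module

lemma sum_smul_pow_apply_pow_apply_qComm (hq0 : q ≠ 0) (hq : q - q⁻¹ ≠ 0)
    (hKE : k * e = q ^ 2 • (e * k)) (hKFb : k * fb = q • (fb * k)) (hEFb : e * fb = fb * e)
    (hEG : e * qComm q fb fa = qComm q fb fa * e - k * fb)
    (hG : fa * qComm q fb fa = q • (qComm q fb fa * fa))
    (hH : fa * qComm q⁻¹ fb fa = q⁻¹ • (qComm q⁻¹ fb fa * fa)) {v : V} (hv : k v = κ • v)
    {N : ℕ} (hnil : (e ^ (N + 1)) v = 0) (hnilG : (e ^ (N + 1)) (qComm q fb fa v) = 0)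
    (c : ℕ → ℂ) :
    ∑ j ∈ range (N + 1), c j • (fa ^ j) ((e ^ j) (qComm q fb fa v))
      = ∑ j ∈ range (N + 1),
          ((c j * q ^ j) • qComm q fb fa ((fa ^ j) ((e ^ j) v))
            + (c (j + 1) * (q ^ j * qNum q (q ^ (j + 1)) * (q * κ) / (q - q⁻¹)))
              • (q ^ j • qComm q fb fa ((fa ^ j) ((e ^ j) v))
                - q⁻¹ ^ j • qComm q⁻¹ fb fa ((fa ^ j) ((e ^ j) v)))) := by
  refine sum_range_eq_of_succ_eq (by simp) (fun j => ?_) (by rw [hnilG, map_zero, smul_zero])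
    (by rw [hnil, map_zero, map_zero, smul_zero])
  rw [pow_succ_apply_pow_succ_apply_qComm hq0 hq hKE hKFb hEFb hEG hG hH hv, smul_add,
    smul_smul, smul_smul]

end Vectors

theorem pi_fgamma_intertwining_general {V : Type*} [AddCommGroup V] [Module ℂ V]
    (q t κ : ℂ) (hq0 : q ≠ 0) (hq : ∀ n : ℕ, 0 < n → q ^ n ≠ 1) (hκ : κ ≠ 0)
    (Ea Fa Fb Ka Kai : Module.End ℂ V)
    (hK : Ka * Kai = 1) (hKi : Kai * Ka = 1)
    (hKE : Ka * Ea = (q ^ 2) • (Ea * Ka))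
    (hKFb : Ka * Fb = q • (Fb * Ka))
    (hEF : Ea * Fa - Fa * Ea = (q - q⁻¹)⁻¹ • (Ka - Kai))
    (hEFb : Ea * Fb = Fb * Ea)
    (hSerre1 : Fa * Fa * Fb - (q + q⁻¹) • (Fa * Fb * Fa) + Fb * Fa * Fa = 0)
    (v : V) (hKv : Ka v = κ • v) (N : ℕ)
    (hnil : (Ea ^ (N + 1)) v = 0)
    (hnil' : (Ea ^ (N + 1)) ((Fb * Fa - q • (Fa * Fb)) v) = 0)
    (hden : ∀ i : ℕ, 1 ≤ i → i ≤ N + 1 → qNum q (t * q ^ (i : ℤ)) ≠ 0) :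
    ∑ k ∈ range (N + 1),
        ((-1 : ℂ) ^ k * (t * (q * (κ * q⁻¹))⁻¹) ^ k /
            (qFact q k * ∏ i ∈ range k, qNum q (t * q ^ ((i : ℤ) + 1)))) •
          (Fa ^ k) ((Ea ^ k) ((Fb * Fa - q • (Fa * Fb)) v))
      = (Fb * Fa - (qNum q t / qNum q (t * q)) • (Fa * Fb))
          (∑ k ∈ range (N + 1),
            ((-1 : ℂ) ^ k * (t * q * (q * κ)⁻¹) ^ k /
                (qFact q k * ∏ i ∈ range k, qNum q (t * q * q ^ ((i : ℤ) + 1)))) •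
              (Fa ^ k) ((Ea ^ k) v)) := by
  have hD : q - q⁻¹ ≠ 0 := sub_inv_ne_zero hq0 (hq 2 two_pos)
  have hd : ∀ k : ℕ, qNum q (q ^ (k + 1)) ≠ 0 := fun k =>
    qNum_ne_zero hD (pow_ne_zero _ hq0) (by rw [← pow_mul]; exact hq _ (by omega))
  have hu : ∀ k ≤ N, qNum q (t * q ^ (k + 1)) ≠ 0 := fun k hk => by
    simpa only [zpow_natCast] using hden (k + 1) (by omega) (by omega)
  have hp : qNum q (t * q) ≠ 0 := by simpa using hu 0 (Nat.zero_le N)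
  have hG : Fa * qComm q Fb Fa = q • (qComm q Fb Fa * Fa) := mul_qComm_of_serre hq0 hSerre1
  have hH : Fa * qComm q⁻¹ Fb Fa = q⁻¹ • (qComm q⁻¹ Fb Fa * Fa) :=
    mul_qComm_of_serre (inv_ne_zero hq0) (by rwa [inv_inv, add_comm q⁻¹ q])
  have hEG := mul_qComm_eq hq0 hD hK hKi hKFb hEF hEFb
  have hy : t * (q * (κ * q⁻¹))⁻¹ = t * κ⁻¹ := by field_simp
  have hy' : t * q * (q * κ)⁻¹ = t * κ⁻¹ := by field_simp
  simp only [hy, hy', ← Nat.cast_succ, zpow_natCast]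
  change ∑ k ∈ range (N + 1),
      projCoeff q t (t * κ⁻¹) k • (Fa ^ k) ((Ea ^ k) (qComm q Fb Fa v))
    = (Fb * Fa - (qNum q t / qNum q (t * q)) • (Fa * Fb))
      (∑ k ∈ range (N + 1), projCoeff q (t * q) (t * κ⁻¹) k • (Fa ^ k) ((Ea ^ k) v))
  rw [sum_smul_pow_apply_pow_apply_qComm hq0 hD hKE hKFb hEFb hEG hG hH hKv hnil hnil', map_sum]
  refine sum_congr rfl fun j hj => ?_
  simp only [map_smul, qComm, LinearMap.sub_apply, LinearMap.smul_apply, Module.End.mul_apply]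
  exact projCoeff_intertwining_term hq0 hD hκ (hd j) (hu j (Nat.lt_succ_iff.mp (mem_range.mp hj)))
    hp _ _

/-- in `U_q(sl3)` with simple roots `α, β` and `γ = α+β`,
`f_γ = f_β f_α - q f_α f_β`, `\hat f_γ(s) = f_β f_α - f_α f_β [s]_q/[s+1]_q`, the shifted
extremal projector `π(s)` of the `α`-sl2-triple satisfies `π(s) f_γ = \hat f_γ(s) π(s+1)`
on every highest weight module, evaluated on a weight vector `v` with
`K_α v = κ • v` on which `e_α` acts nilpotently (`t = q^s`; `f_γ v` has
`K_α`-eigenvalue `κ q^{-1}`). -/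
theorem pi_fgamma_intertwining {V : Type*} [AddCommGroup V] [Module ℂ V]
    (q t κ : ℂ) (hq0 : q ≠ 0) (hq : ∀ n : ℕ, 0 < n → q ^ n ≠ 1) (ht : t ≠ 0) (hκ : κ ≠ 0)
    (Ea Fa Fb Ka Kai : Module.End ℂ V)
    (hK : Ka * Kai = 1) (hKi : Kai * Ka = 1)
    (hKE : Ka * Ea = (q ^ 2) • (Ea * Ka)) (hKF : Ka * Fa = (q ^ 2)⁻¹ • (Fa * Ka))
    (hKFb : Ka * Fb = q • (Fb * Ka))
    (hEF : Ea * Fa - Fa * Ea = (q - q⁻¹)⁻¹ • (Ka - Kai))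
    (hEFb : Ea * Fb = Fb * Ea)
    (hSerre1 : Fa * Fa * Fb - (q + q⁻¹) • (Fa * Fb * Fa) + Fb * Fa * Fa = 0)
    (hSerre2 : Fb * Fb * Fa - (q + q⁻¹) • (Fb * Fa * Fb) + Fa * Fb * Fb = 0)
    (v : V) (hKv : Ka v = κ • v) (N : ℕ)
    (hnil : (Ea ^ (N + 1)) v = 0)
    (hnil' : (Ea ^ (N + 1)) ((Fb * Fa - q • (Fa * Fb)) v) = 0)
    (hden : ∀ i : ℕ, 1 ≤ i → i ≤ N + 1 → qNum q (t * q ^ (i : ℤ)) ≠ 0) :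
    ∑ k ∈ range (N + 1),
        ((-1 : ℂ) ^ k * (t * (q * (κ * q⁻¹))⁻¹) ^ k /
            (qFact q k * ∏ i ∈ range k, qNum q (t * q ^ ((i : ℤ) + 1)))) •
          (Fa ^ k) ((Ea ^ k) ((Fb * Fa - q • (Fa * Fb)) v))
      = (Fb * Fa - (qNum q t / qNum q (t * q)) • (Fa * Fb))
          (∑ k ∈ range (N + 1),
            ((-1 : ℂ) ^ k * (t * q * (q * κ)⁻¹) ^ k /
                (qFact q k * ∏ i ∈ range k, qNum q (t * q * q ^ ((i : ℤ) + 1)))) •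
              (Fa ^ k) ((Ea ^ k) v)) :=
  pi_fgamma_intertwining_general q t κ hq0 hq hκ Ea Fa Fb Ka Kai hK hKi hKE hKFb hEF hEFb hSerre1 v
    hKv N hnil hnil' hden
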